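/- arXiv:2412.15877 — 2 statements merged into one kernel-verified Lean document; each statement's English description precedes it below -/
import Mathlib

section
/- Suppose the aggregation map φ satisfies: φ(s1) = φ(s2) implies |Q*(s1, a) − Q*(s2, a)| ≤ ε for all a ∈ A1×A2, for some ε ≥ 0. Then for every s ∈ S and every a ∈ A1×A2, |Q*(s, a) − Q^{π1†, π_GA,2*}(s, a)| ≤ 2ε/(1−γ)². -/
open Finset

/-- A mixed Markov policy: a probability distribution over actions at each state. -/
def IsPolicy {S A : Type*} [Fintype A] (π : S → A → ℝ) : Prop :=
  (∀ s a, 0 ≤ π s a) ∧ ∀ s, ∑ a, π s a = 1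

/-- A transition kernel: a probability distribution over next states for every
state and joint action. -/
def IsKernel {S A1 A2 : Type*} [Fintype S] (P : S → A1 → A2 → S → ℝ) : Prop :=
  (∀ s a1 a2 s', 0 ≤ P s a1 a2 s') ∧ ∀ s a1 a2, ∑ s', P s a1 a2 s' = 1

/-- Rewards lie in `[0,1]`. -/
def IsReward {S A1 A2 : Type*} (R : S → A1 → A2 → ℝ) : Prop :=
  ∀ s a1 a2, 0 ≤ R s a1 a2 ∧ R s a1 a2 ≤ 1

/-- The state-action value induced by a state value function `V`:
`Q(s,a) = R(s,a) + γ * Σ_{s'} P(s'|s,a) V(s')`. -/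
def Qf {S A1 A2 : Type*} [Fintype S] (R : S → A1 → A2 → ℝ) (P : S → A1 → A2 → S → ℝ)
    (γ : ℝ) (V : S → ℝ) (s : S) (a1 : A1) (a2 : A2) : ℝ :=
  R s a1 a2 + γ * ∑ s', P s a1 a2 s' * V s'

/-- `V` satisfies the Bellman equation for the policy profile `(π1, π2)`. -/
def IsValue {S A1 A2 : Type*} [Fintype S] [Fintype A1] [Fintype A2]
    (R : S → A1 → A2 → ℝ) (P : S → A1 → A2 → S → ℝ) (γ : ℝ)
    (π1 : S → A1 → ℝ) (π2 : S → A2 → ℝ) (V : S → ℝ) : Prop :=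
  ∀ s, V s = ∑ a1, ∑ a2, π1 s a1 * π2 s a2 * Qf R P γ V s a1 a2

/-- `Val` assigns to every policy profile its value function. -/
def IsValueOperator {S A1 A2 : Type*} [Fintype S] [Fintype A1] [Fintype A2]
    (R : S → A1 → A2 → ℝ) (P : S → A1 → A2 → S → ℝ) (γ : ℝ)
    (Val : (S → A1 → ℝ) → (S → A2 → ℝ) → S → ℝ) : Prop :=
  ∀ π1 π2, IsPolicy π1 → IsPolicy π2 → IsValue R P γ π1 π2 (Val π1 π2)

/-- `(π1, π2)` is a Nash equilibrium of the game whose values are given by `Val`: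
for all states `s` and all policies `π1'`, `π2'`,
`Val π1 π2' s ≥ Val π1 π2 s ≥ Val π1' π2 s`. -/
def IsNash {S A1 A2 : Type*} [Fintype A1] [Fintype A2]
    (Val : (S → A1 → ℝ) → (S → A2 → ℝ) → S → ℝ)
    (π1 : S → A1 → ℝ) (π2 : S → A2 → ℝ) : Prop :=
  IsPolicy π1 ∧ IsPolicy π2 ∧
    ∀ s, ∀ π1' π2', IsPolicy π1' → IsPolicy π2' →
      Val π1 π2' s ≥ Val π1 π2 s ∧ Val π1 π2 s ≥ Val π1' π2 s

/-- `π1d` is a best response for player 1 against the player-2 policy `π2`: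
`Val π1d π2 s = max_{π1} Val π1 π2 s` for every state `s`. -/
def IsBestResponse1 {S A1 A2 : Type*} [Fintype A1]
    (Val : (S → A1 → ℝ) → (S → A2 → ℝ) → S → ℝ)
    (π1d : S → A1 → ℝ) (π2 : S → A2 → ℝ) : Prop :=
  IsPolicy π1d ∧ ∀ π1, IsPolicy π1 → ∀ s, Val π1 π2 s ≤ Val π1d π2 s

/-- A weight function for the aggregation map `φ`: weights lie in `[0,1]` and sum
to one within each aggregated class. -/
def IsAggWeight {S SA : Type*} [Fintype S] [DecidableEq SA] (φ : S → SA) (w : S → ℝ) : Prop :=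
  (∀ s, 0 ≤ w s ∧ w s ≤ 1) ∧ ∀ sA : SA, ∑ s ∈ univ.filter (fun s => φ s = sA), w s = 1

/-- The abstract transition kernel:
`P_A(s_A'|s_A,a) = Σ_{s : φ s = s_A} Σ_{s' : φ s' = s_A'} P(s'|s,a) w(s)`. -/
def PA {S SA A1 A2 : Type*} [Fintype S] [DecidableEq SA]
    (P : S → A1 → A2 → S → ℝ) (φ : S → SA) (w : S → ℝ)
    (sA : SA) (a1 : A1) (a2 : A2) (sA' : SA) : ℝ :=
  ∑ s ∈ univ.filter (fun s => φ s = sA),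
    ∑ s' ∈ univ.filter (fun s' => φ s' = sA'), P s a1 a2 s' * w s

/-- The abstract reward function:
`R_A(s_A,a) = Σ_{s : φ s = s_A} R(s,a) w(s)`. -/
def RA {S SA A1 A2 : Type*} [Fintype S] [DecidableEq SA]
    (R : S → A1 → A2 → ℝ) (φ : S → SA) (w : S → ℝ)
    (sA : SA) (a1 : A1) (a2 : A2) : ℝ :=
  ∑ s ∈ univ.filter (fun s => φ s = sA), R s a1 a2 * w s

section AvgLemmas

lemma avg_le_of {ι : Type*} (t : Finset ι) (c f : ι → ℝ) (hc : ∀ i ∈ t, 0 ≤ c i)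
    (hsum : ∑ i ∈ t, c i = 1) (B : ℝ) (hf : ∀ i ∈ t, f i ≤ B) :
    ∑ i ∈ t, c i * f i ≤ B := by
  calc ∑ i ∈ t, c i * f i ≤ ∑ i ∈ t, c i * B :=
        Finset.sum_le_sum (fun i hi => mul_le_mul_of_nonneg_left (hf i hi) (hc i hi))
    _ = B := by rw [← Finset.sum_mul, hsum, one_mul]

lemma le_avg_of {ι : Type*} (t : Finset ι) (c f : ι → ℝ) (hc : ∀ i ∈ t, 0 ≤ c i)
    (hsum : ∑ i ∈ t, c i = 1) (B : ℝ) (hf : ∀ i ∈ t, B ≤ f i) :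
    B ≤ ∑ i ∈ t, c i * f i := by
  calc B = ∑ i ∈ t, c i * B := by rw [← Finset.sum_mul, hsum, one_mul]
    _ ≤ ∑ i ∈ t, c i * f i :=
        Finset.sum_le_sum (fun i hi => mul_le_mul_of_nonneg_left (hf i hi) (hc i hi))

lemma avg_abs_le {ι : Type*} (t : Finset ι) (c f : ι → ℝ) (hc : ∀ i ∈ t, 0 ≤ c i)
    (hsum : ∑ i ∈ t, c i = 1) (B : ℝ) (hf : ∀ i ∈ t, |f i| ≤ B) :
    |∑ i ∈ t, c i * f i| ≤ B := by
  calc |∑ i ∈ t, c i * f i| ≤ ∑ i ∈ t, |c i * f i| := Finset.abs_sum_le_sum_abs _ _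
    _ = ∑ i ∈ t, c i * |f i| := Finset.sum_congr rfl fun i hi => by
        rw [abs_mul, abs_of_nonneg (hc i hi)]
    _ ≤ B := avg_le_of t c _ hc hsum B hf

lemma avg_mul1 {A1 A2 : Type*} [Fintype A1] [Fintype A2]
    (p : A1 → ℝ) (q : A2 → ℝ) (f : A1 → A2 → ℝ) :
    ∑ a1, ∑ a2, p a1 * q a2 * f a1 a2 = ∑ a1, p a1 * ∑ a2, q a2 * f a1 a2 := by
  refine Finset.sum_congr rfl fun a1 _ => ?_
  rw [Finset.mul_sum]
  exact Finset.sum_congr rfl fun a2 _ => by ring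

lemma avg_swap {A1 A2 : Type*} [Fintype A1] [Fintype A2]
    (p : A1 → ℝ) (q : A2 → ℝ) (f : A1 → A2 → ℝ) :
    ∑ a1, ∑ a2, p a1 * q a2 * f a1 a2 = ∑ a2, q a2 * ∑ a1, p a1 * f a1 a2 := by
  rw [Finset.sum_comm]
  refine Finset.sum_congr rfl fun a2 _ => ?_
  rw [Finset.mul_sum]
  exact Finset.sum_congr rfl fun a1 _ => by ring

lemma avg2_le {A1 A2 : Type*} [Fintype A1] [Fintype A2]
    (p : A1 → ℝ) (q : A2 → ℝ) (hp : ∀ a, 0 ≤ p a) (hq : ∀ a, 0 ≤ q a)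
    (hps : ∑ a, p a = 1) (hqs : ∑ a, q a = 1)
    (f : A1 → A2 → ℝ) (B : ℝ) (hf : ∀ a1 a2, f a1 a2 ≤ B) :
    ∑ a1, ∑ a2, p a1 * q a2 * f a1 a2 ≤ B := by
  rw [avg_mul1]
  refine avg_le_of _ p _ (fun i _ => hp i) hps B fun a1 _ => ?_
  exact avg_le_of _ q _ (fun i _ => hq i) hqs B fun a2 _ => hf a1 a2

lemma Qf_sub {S A1 A2 : Type*} [Fintype S] (R : S → A1 → A2 → ℝ)
    (P : S → A1 → A2 → S → ℝ) (γ : ℝ) (V W : S → ℝ) (s : S) (a1 : A1) (a2 : A2) :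
    Qf R P γ V s a1 a2 - Qf R P γ W s a1 a2
      = γ * ∑ s', P s a1 a2 s' * (V s' - W s') := by
  have h : ∑ s', P s a1 a2 s' * (V s' - W s')
      = ∑ s', P s a1 a2 s' * V s' - ∑ s', P s a1 a2 s' * W s' := by
    rw [← Finset.sum_sub_distrib]
    exact Finset.sum_congr rfl fun s' _ => by ring
  simp only [Qf, h]
  ring

end AvgLemmas

lemma sum2_sub {A1 A2 : Type*} [Fintype A1] [Fintype A2]
    (p : A1 → ℝ) (q : A2 → ℝ) (f g : A1 → A2 → ℝ) :
    (∑ a1, ∑ a2, p a1 * q a2 * f a1 a2) - (∑ a1, ∑ a2, p a1 * q a2 * g a1 a2)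
      = ∑ a1, ∑ a2, p a1 * q a2 * (f a1 a2 - g a1 a2) := by
  rw [← Finset.sum_sub_distrib]
  refine Finset.sum_congr rfl fun a1 _ => ?_
  rw [← Finset.sum_sub_distrib]
  exact Finset.sum_congr rfl fun a2 _ => by ring
section OneStep

variable {S A1 A2 : Type*} [Fintype S] [Nonempty S] [Fintype A1] [Fintype A2]

/-- At a Nash equilibrium, no one-step pure deviation of player 1 helps. -/
lemma nash_one_step1
    (R : S → A1 → A2 → ℝ) (P : S → A1 → A2 → S → ℝ) (γ : ℝ)
    (hP : IsKernel P) (hγ0 : 0 ≤ γ) (hγ1 : γ < 1)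
    (Val : (S → A1 → ℝ) → (S → A2 → ℝ) → S → ℝ) (hVal : IsValueOperator R P γ Val)
    (π1 : S → A1 → ℝ) (π2 : S → A2 → ℝ) (hN : IsNash Val π1 π2)
    (s : S) (a1 : A1) :
    ∑ a2, π2 s a2 * Qf R P γ (Val π1 π2) s a1 a2 ≤ Val π1 π2 s := by
  classical
  by_contra hcon
  push_neg at hcon
  obtain ⟨hπ1, hπ2, hNE⟩ := hN
  set V : S → ℝ := Val π1 π2 with hVdef
  have hVb : IsValue R P γ π1 π2 V := hVal π1 π2 hπ1 hπ2
  set π1' : S → A1 → ℝ :=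
    fun t b => if t = s then (if b = a1 then 1 else 0) else π1 t b with hπ1'def
  have hπ1' : IsPolicy π1' := by
    constructor
    · intro t b
      simp only [hπ1'def]
      split
      · split <;> norm_num
      · exact hπ1.1 t b
    · intro t
      simp only [hπ1'def]
      split
      · simp
      · exact hπ1.2 t
  set W : S → ℝ := Val π1' π2 with hWdef
  have hWb : IsValue R P γ π1' π2 W := hVal π1' π2 hπ1' hπ2
  have hWle : ∀ t, W t ≤ V t := fun t => (hNE t π1' π2 hπ1' hπ2).2
  obtain ⟨t0, _, ht0⟩ := Finset.exists_max_image univ (fun t => V t - W t) univ_nonempty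
  -- X t : one-step lookahead using V and policy (π1', π2)
  have hXeq : ∀ t, t ≠ s →
      (∑ b1, ∑ b2, π1' t b1 * π2 t b2 * Qf R P γ V t b1 b2) = V t := by
    intro t ht
    rw [hVb t]
    refine Finset.sum_congr rfl fun b1 _ => Finset.sum_congr rfl fun b2 _ => ?_
    simp [hπ1'def, ht]
  have hXs : (∑ b1, ∑ b2, π1' s b1 * π2 s b2 * Qf R P γ V s b1 b2)
      = ∑ a2, π2 s a2 * Qf R P γ V s a1 a2 := by
    have : ∀ b1, (∑ b2, π1' s b1 * π2 s b2 * Qf R P γ V s b1 b2)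
        = (if b1 = a1 then (1:ℝ) else 0) * ∑ b2, π2 s b2 * Qf R P γ V s b1 b2 := by
      intro b1
      rw [Finset.mul_sum]
      refine Finset.sum_congr rfl fun b2 _ => ?_
      simp only [hπ1'def, if_pos rfl]
      ring
    simp only [this, ite_mul, one_mul, zero_mul]
    simp
  -- the gap V - W is bounded by γ times its max
  have hstep : ∀ t, V t - W t ≤
      (V t - ∑ b1, ∑ b2, π1' t b1 * π2 t b2 * Qf R P γ V t b1 b2)
        + γ * (V t0 - W t0) := by
    intro t
    have hWt : W t = ∑ b1, ∑ b2, π1' t b1 * π2 t b2 * Qf R P γ W t b1 b2 := hWb t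
    have hdiff : (∑ b1, ∑ b2, π1' t b1 * π2 t b2 * Qf R P γ V t b1 b2) - W t
        ≤ γ * (V t0 - W t0) := by
      rw [hWt, ← Finset.sum_sub_distrib]
      have hre : ∀ b1, (∑ b2, π1' t b1 * π2 t b2 * Qf R P γ V t b1 b2)
            - (∑ b2, π1' t b1 * π2 t b2 * Qf R P γ W t b1 b2)
          = ∑ b2, π1' t b1 * π2 t b2 *
              (Qf R P γ V t b1 b2 - Qf R P γ W t b1 b2) := by
        intro b1
        rw [← Finset.sum_sub_distrib]
        exact Finset.sum_congr rfl fun b2 _ => by ring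
      simp only [hre]
      refine avg2_le (π1' t) (π2 t) (hπ1'.1 t) (hπ2.1 t) (hπ1'.2 t) (hπ2.2 t) _ _
        fun b1 b2 => ?_
      rw [Qf_sub]
      have : ∑ s', P t b1 b2 s' * (V s' - W s') ≤ V t0 - W t0 :=
        avg_le_of univ _ _ (fun s' _ => hP.1 t b1 b2 s') (hP.2 t b1 b2) _
          fun s' _ => ht0 s' (Finset.mem_univ s')
      exact mul_le_mul_of_nonneg_left this hγ0
    linarith
  have hXle : ∀ t, V t - (∑ b1, ∑ b2, π1' t b1 * π2 t b2 * Qf R P γ V t b1 b2) ≤ 0 := by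
    intro t
    by_cases ht : t = s
    · subst ht
      rw [hXs]
      linarith
    · rw [hXeq t ht]
      linarith
  have hM0 : V t0 - W t0 ≤ 0 := by
    have h1 := hstep t0
    have h2 := hXle t0
    nlinarith
  have hVW : ∀ t, V t = W t := by
    intro t
    have h1 := hWle t
    have h2 := ht0 t (Finset.mem_univ t)
    linarith
  have hWV : W = V := funext fun t => (hVW t).symm
  have hWs : W s = ∑ a2, π2 s a2 * Qf R P γ V s a1 a2 := by
    rw [hWb s, ← hXs]
    refine Finset.sum_congr rfl fun b1 _ => Finset.sum_congr rfl fun b2 _ => ?_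
    rw [hWV]
  rw [hVW s] at hcon
  rw [hWs] at hcon
  exact lt_irrefl _ hcon

/-- At a Nash equilibrium, no one-step pure deviation of player 2 helps. -/
lemma nash_one_step2
    (R : S → A1 → A2 → ℝ) (P : S → A1 → A2 → S → ℝ) (γ : ℝ)
    (hP : IsKernel P) (hγ0 : 0 ≤ γ) (hγ1 : γ < 1)
    (Val : (S → A1 → ℝ) → (S → A2 → ℝ) → S → ℝ) (hVal : IsValueOperator R P γ Val)
    (π1 : S → A1 → ℝ) (π2 : S → A2 → ℝ) (hN : IsNash Val π1 π2)
    (s : S) (a2 : A2) :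
    Val π1 π2 s ≤ ∑ a1, π1 s a1 * Qf R P γ (Val π1 π2) s a1 a2 := by
  classical
  by_contra hcon
  push_neg at hcon
  obtain ⟨hπ1, hπ2, hNE⟩ := hN
  set V : S → ℝ := Val π1 π2 with hVdef
  have hVb : IsValue R P γ π1 π2 V := hVal π1 π2 hπ1 hπ2
  set π2' : S → A2 → ℝ :=
    fun t b => if t = s then (if b = a2 then 1 else 0) else π2 t b with hπ2'def
  have hπ2' : IsPolicy π2' := by
    constructor
    · intro t b
      simp only [hπ2'def]
      split
      · split <;> norm_num
      · exact hπ2.1 t b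
    · intro t
      simp only [hπ2'def]
      split
      · simp
      · exact hπ2.2 t
  set W : S → ℝ := Val π1 π2' with hWdef
  have hWb : IsValue R P γ π1 π2' W := hVal π1 π2' hπ1 hπ2'
  have hWge : ∀ t, V t ≤ W t := fun t => (hNE t π1 π2' hπ1 hπ2').1
  obtain ⟨t0, _, ht0⟩ := Finset.exists_max_image univ (fun t => W t - V t) univ_nonempty
  have hXeq : ∀ t, t ≠ s →
      (∑ b1, ∑ b2, π1 t b1 * π2' t b2 * Qf R P γ V t b1 b2) = V t := by
    intro t ht
    rw [hVb t]
    refine Finset.sum_congr rfl fun b1 _ => Finset.sum_congr rfl fun b2 _ => ?_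
    simp [hπ2'def, ht]
  have hXs : (∑ b1, ∑ b2, π1 s b1 * π2' s b2 * Qf R P γ V s b1 b2)
      = ∑ a1, π1 s a1 * Qf R P γ V s a1 a2 := by
    refine Finset.sum_congr rfl fun b1 _ => ?_
    have : ∀ b2, π1 s b1 * π2' s b2 * Qf R P γ V s b1 b2
        = (if b2 = a2 then (1:ℝ) else 0) * (π1 s b1 * Qf R P γ V s b1 b2) := by
      intro b2
      simp only [hπ2'def, if_pos rfl]
      ring
    simp only [this, ite_mul, one_mul, zero_mul]
    simp
  have hstep : ∀ t, W t - V t ≤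
      ((∑ b1, ∑ b2, π1 t b1 * π2' t b2 * Qf R P γ V t b1 b2) - V t)
        + γ * (W t0 - V t0) := by
    intro t
    have hWt : W t = ∑ b1, ∑ b2, π1 t b1 * π2' t b2 * Qf R P γ W t b1 b2 := hWb t
    have hdiff : W t - (∑ b1, ∑ b2, π1 t b1 * π2' t b2 * Qf R P γ V t b1 b2)
        ≤ γ * (W t0 - V t0) := by
      rw [hWt, ← Finset.sum_sub_distrib]
      have hre : ∀ b1, (∑ b2, π1 t b1 * π2' t b2 * Qf R P γ W t b1 b2)
            - (∑ b2, π1 t b1 * π2' t b2 * Qf R P γ V t b1 b2)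
          = ∑ b2, π1 t b1 * π2' t b2 *
              (Qf R P γ W t b1 b2 - Qf R P γ V t b1 b2) := by
        intro b1
        rw [← Finset.sum_sub_distrib]
        exact Finset.sum_congr rfl fun b2 _ => by ring
      simp only [hre]
      refine avg2_le (π1 t) (π2' t) (hπ1.1 t) (hπ2'.1 t) (hπ1.2 t) (hπ2'.2 t) _ _
        fun b1 b2 => ?_
      rw [Qf_sub]
      have : ∑ s', P t b1 b2 s' * (W s' - V s') ≤ W t0 - V t0 :=
        avg_le_of univ _ _ (fun s' _ => hP.1 t b1 b2 s') (hP.2 t b1 b2) _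
          fun s' _ => ht0 s' (Finset.mem_univ s')
      exact mul_le_mul_of_nonneg_left this hγ0
    linarith
  have hXle : ∀ t, (∑ b1, ∑ b2, π1 t b1 * π2' t b2 * Qf R P γ V t b1 b2) - V t ≤ 0 := by
    intro t
    by_cases ht : t = s
    · subst ht
      rw [hXs]
      linarith
    · rw [hXeq t ht]
      linarith
  have hM0 : W t0 - V t0 ≤ 0 := by
    have h1 := hstep t0
    have h2 := hXle t0
    nlinarith
  have hVW : ∀ t, V t = W t := by
    intro t
    have h1 := hWge t
    have h2 := ht0 t (Finset.mem_univ t)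
    linarith
  have hWV : W = V := funext fun t => (hVW t).symm
  have hWs : W s = ∑ a1, π1 s a1 * Qf R P γ V s a1 a2 := by
    rw [hWb s, ← hXs]
    refine Finset.sum_congr rfl fun b1 _ => Finset.sum_congr rfl fun b2 _ => ?_
    rw [hWV]
  rw [hVW s] at hcon
  rw [hWs] at hcon
  exact lt_irrefl _ hcon

end OneStep
section Agg

variable {S SA A1 A2 : Type*} [Fintype S] [Fintype SA] [DecidableEq SA]

lemma PA_kernel (P : S → A1 → A2 → S → ℝ) (hP : IsKernel P)
    (φ : S → SA) (w : S → ℝ) (hw : IsAggWeight φ w) :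
    IsKernel (PA P φ w) := by
  constructor
  · intro sA a1 a2 sA'
    refine Finset.sum_nonneg fun s _ => Finset.sum_nonneg fun s' _ => ?_
    exact mul_nonneg (hP.1 s a1 a2 s') (hw.1 s).1
  · intro sA a1 a2
    unfold PA
    rw [Finset.sum_comm]
    have h : ∀ y : S, ∑ sA' : SA, ∑ s' ∈ univ.filter (fun s' => φ s' = sA'),
        P y a1 a2 s' * w y = w y := by
      intro y
      rw [Finset.sum_fiberwise univ φ (fun s' => P y a1 a2 s' * w y),
        ← Finset.sum_mul, hP.2 y a1 a2, one_mul]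
    simp only [h]
    exact hw.2 sA

lemma QA_eq (P : S → A1 → A2 → S → ℝ) (R : S → A1 → A2 → ℝ)
    (φ : S → SA) (w : S → ℝ) (γ : ℝ) (v : SA → ℝ) (sA : SA) (a1 : A1) (a2 : A2) :
    Qf (RA R φ w) (PA P φ w) γ v sA a1 a2
      = ∑ g ∈ univ.filter (fun g => φ g = sA),
          w g * Qf R P γ (fun t => v (φ t)) g a1 a2 := by
  unfold Qf RA PA
  have h1 : ∑ sA', (∑ g ∈ univ.filter (fun g => φ g = sA),
        ∑ s' ∈ univ.filter (fun s' => φ s' = sA'), P g a1 a2 s' * w g) * v sA'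
      = ∑ g ∈ univ.filter (fun g => φ g = sA),
        ∑ s', P g a1 a2 s' * w g * v (φ s') := by
    simp only [Finset.sum_mul]
    rw [Finset.sum_comm]
    refine Finset.sum_congr rfl fun g _ => ?_
    rw [← Finset.sum_fiberwise univ φ (fun s' => P g a1 a2 s' * w g * v (φ s'))]
    refine Finset.sum_congr rfl fun sA' _ => Finset.sum_congr rfl fun s' hs' => ?_
    rw [(Finset.mem_filter.mp hs').2]
  rw [h1, Finset.mul_sum, ← Finset.sum_add_distrib]
  refine Finset.sum_congr rfl fun g _ => ?_
  rw [mul_add, Finset.mul_sum, Finset.mul_sum, Finset.mul_sum]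
  congr 1
  · ring
  · refine Finset.sum_congr rfl fun s' _ => by ring

end Agg
theorem best_response_Q_close_to_minimax_Q
    {S SA A1 A2 : Type*}
    [Fintype S] [Nonempty S] [Fintype SA] [DecidableEq SA]
    [Fintype A1] [Nonempty A1] [Fintype A2] [Nonempty A2]
    (P : S → A1 → A2 → S → ℝ) (R : S → A1 → A2 → ℝ) (γ : ℝ)
    (hP : IsKernel P) (hR : IsReward R) (hγ0 : 0 ≤ γ) (hγ1 : γ < 1)
    (Val : (S → A1 → ℝ) → (S → A2 → ℝ) → S → ℝ)
    (hVal : IsValueOperator R P γ Val)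
    (φ : S → SA) (hφ : Function.Surjective φ)
    (w : S → ℝ) (hw : IsAggWeight φ w)
    (ValA : (SA → A1 → ℝ) → (SA → A2 → ℝ) → SA → ℝ)
    (hValA : IsValueOperator (RA R φ w) (PA P φ w) γ ValA)
    (πA1 : SA → A1 → ℝ) (πA2 : SA → A2 → ℝ)
    (hNashA : IsNash ValA πA1 πA2)
    (π1s : S → A1 → ℝ) (π2s : S → A2 → ℝ)
    (hNash : IsNash Val π1s π2s)
    (π1d : S → A1 → ℝ)
    (hBR : IsBestResponse1 Val π1d (fun s => πA2 (φ s)))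
    (ε : ℝ) (hε : 0 ≤ ε)
    (hagg : ∀ s1 s2 : S, φ s1 = φ s2 → ∀ (a1 : A1) (a2 : A2),
      |Qf R P γ (Val π1s π2s) s1 a1 a2 - Qf R P γ (Val π1s π2s) s2 a1 a2| ≤ ε)
    :
    ∀ (s : S) (a1 : A1) (a2 : A2),
      |Qf R P γ (Val π1s π2s) s a1 a2 - Qf R P γ (Val π1d (fun s => πA2 (φ s))) s a1 a2| ≤ 2 * ε / (1 - γ) ^ 2 := by
  classical
  have hSA : Nonempty SA := Nonempty.map φ inferInstance
  have hγ1' : (0:ℝ) < 1 - γ := by linarith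
  have hPA : IsKernel (PA P φ w) := PA_kernel P hP φ w hw
  have hπA2 : IsPolicy πA2 := hNashA.2.1
  have hπA1 : IsPolicy πA1 := hNashA.1
  have hπ1s : IsPolicy π1s := hNash.1
  have hπ2s : IsPolicy π2s := hNash.2.1
  have h2g : IsPolicy (fun s => πA2 (φ s)) := ⟨fun s a => hπA2.1 _ a, fun s => hπA2.2 _⟩
  -- one-step facts at the two Nash equilibria
  have hg1 : ∀ s a1, ∑ a2, π2s s a2 * Qf R P γ (Val π1s π2s) s a1 a2 ≤ Val π1s π2s s :=
    nash_one_step1 R P γ hP hγ0 hγ1 Val hVal π1s π2s hNash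
  have hg2 : ∀ s a2, Val π1s π2s s ≤ ∑ a1, π1s s a1 * Qf R P γ (Val π1s π2s) s a1 a2 :=
    nash_one_step2 R P γ hP hγ0 hγ1 Val hVal π1s π2s hNash
  have hA1 : ∀ sA a1, ∑ a2, πA2 sA a2 *
      Qf (RA R φ w) (PA P φ w) γ (ValA πA1 πA2) sA a1 a2 ≤ ValA πA1 πA2 sA :=
    nash_one_step1 (RA R φ w) (PA P φ w) γ hPA hγ0 hγ1 ValA hValA πA1 πA2 hNashA
  have hA2 : ∀ sA a2, ValA πA1 πA2 sA ≤ ∑ a1, πA1 sA a1 *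
      Qf (RA R φ w) (PA P φ w) γ (ValA πA1 πA2) sA a1 a2 :=
    nash_one_step2 (RA R φ w) (PA P φ w) γ hPA hγ0 hγ1 ValA hValA πA1 πA2 hNashA
  -- Δ : the maximal gap between abstract and ground Q values
  have hEx : ∃ Δ : ℝ, 0 ≤ Δ ∧
      (∀ s a1 a2, |Qf (RA R φ w) (PA P φ w) γ (ValA πA1 πA2) (φ s) a1 a2
        - Qf R P γ (Val π1s π2s) s a1 a2| ≤ Δ) ∧
      (∃ s a1 a2, Δ = |Qf (RA R φ w) (PA P φ w) γ (ValA πA1 πA2) (φ s) a1 a2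
        - Qf R P γ (Val π1s π2s) s a1 a2|) := by
    obtain ⟨p0, _, hp0⟩ := Finset.exists_max_image (univ : Finset (S × A1 × A2))
      (fun p => |Qf (RA R φ w) (PA P φ w) γ (ValA πA1 πA2) (φ p.1) p.2.1 p.2.2
        - Qf R P γ (Val π1s π2s) p.1 p.2.1 p.2.2|) univ_nonempty
    exact ⟨_, abs_nonneg _, fun s a1 a2 => hp0 (s, a1, a2) (Finset.mem_univ _),
      ⟨p0.1, p0.2.1, p0.2.2, rfl⟩⟩
  obtain ⟨Δ, hΔ0, hΔmax, s₀, a₀, b₀, hΔeq⟩ := hEx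
  -- step (a): the value functions are Δ-close
  have hVdiff : ∀ s, |ValA πA1 πA2 (φ s) - Val π1s π2s s| ≤ Δ := by
    intro s
    rw [abs_sub_le_iff]
    constructor
    · -- VA (φ s) - V* s ≤ Δ
      have hN1 : ValA πA1 πA2 (φ s) ≤ ∑ a1, ∑ a2, πA1 (φ s) a1 * π2s s a2 *
          Qf (RA R φ w) (PA P φ w) γ (ValA πA1 πA2) (φ s) a1 a2 := by
        rw [avg_swap]
        exact le_avg_of univ (π2s s) _ (fun a _ => hπ2s.1 s a) (hπ2s.2 s) _
          (fun a2 _ => hA2 (φ s) a2)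
      have hN2 : ∑ a1, ∑ a2, πA1 (φ s) a1 * π2s s a2 *
          Qf R P γ (Val π1s π2s) s a1 a2 ≤ Val π1s π2s s := by
        rw [avg_mul1]
        exact avg_le_of univ (πA1 (φ s)) _ (fun a _ => hπA1.1 _ a) (hπA1.2 _) _
          (fun a1 _ => hg1 s a1)
      have hN3 : (∑ a1, ∑ a2, πA1 (φ s) a1 * π2s s a2 *
            Qf (RA R φ w) (PA P φ w) γ (ValA πA1 πA2) (φ s) a1 a2)
          - (∑ a1, ∑ a2, πA1 (φ s) a1 * π2s s a2 *
            Qf R P γ (Val π1s π2s) s a1 a2) ≤ Δ := by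
        rw [sum2_sub]
        exact avg2_le _ _ (hπA1.1 _) (hπ2s.1 s) (hπA1.2 _) (hπ2s.2 s) _ _
          fun a1 a2 => (abs_sub_le_iff.mp (hΔmax s a1 a2)).1
      linarith
    · -- V* s - VA (φ s) ≤ Δ
      have hM1 : Val π1s π2s s ≤ ∑ a1, ∑ a2, π1s s a1 * πA2 (φ s) a2 *
          Qf R P γ (Val π1s π2s) s a1 a2 := by
        rw [avg_swap]
        exact le_avg_of univ (πA2 (φ s)) _ (fun a _ => hπA2.1 _ a) (hπA2.2 _) _
          (fun a2 _ => hg2 s a2)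
      have hM2 : ∑ a1, ∑ a2, π1s s a1 * πA2 (φ s) a2 *
          Qf (RA R φ w) (PA P φ w) γ (ValA πA1 πA2) (φ s) a1 a2
            ≤ ValA πA1 πA2 (φ s) := by
        rw [avg_mul1]
        exact avg_le_of univ (π1s s) _ (fun a _ => hπ1s.1 s a) (hπ1s.2 s) _
          (fun a1 _ => hA1 (φ s) a1)
      have hM3 : (∑ a1, ∑ a2, π1s s a1 * πA2 (φ s) a2 *
            Qf R P γ (Val π1s π2s) s a1 a2)
          - (∑ a1, ∑ a2, π1s s a1 * πA2 (φ s) a2 *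
            Qf (RA R φ w) (PA P φ w) γ (ValA πA1 πA2) (φ s) a1 a2) ≤ Δ := by
        rw [sum2_sub]
        exact avg2_le _ _ (hπ1s.1 s) (hπA2.1 _) (hπ1s.2 s) (hπA2.2 _) _ _
          fun a1 a2 => (abs_sub_le_iff.mp (hΔmax s a1 a2)).2
      linarith
  -- step (b): each Q-gap is at most ε + γΔ
  have hQclose : ∀ s a1 a2, |Qf (RA R φ w) (PA P φ w) γ (ValA πA1 πA2) (φ s) a1 a2
      - Qf R P γ (Val π1s π2s) s a1 a2| ≤ ε + γ * Δ := by
    intro s a1 a2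
    rw [QA_eq]
    have hconst : Qf R P γ (Val π1s π2s) s a1 a2
        = ∑ g ∈ univ.filter (fun g => φ g = φ s), w g * Qf R P γ (Val π1s π2s) s a1 a2 := by
      rw [← Finset.sum_mul, hw.2 (φ s), one_mul]
    rw [hconst, ← Finset.sum_sub_distrib]
    have hre : ∀ g ∈ univ.filter (fun g => φ g = φ s),
        w g * Qf R P γ (fun t => ValA πA1 πA2 (φ t)) g a1 a2
          - w g * Qf R P γ (Val π1s π2s) s a1 a2
        = w g * (Qf R P γ (fun t => ValA πA1 πA2 (φ t)) g a1 a2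
          - Qf R P γ (Val π1s π2s) s a1 a2) := fun g _ => by ring
    rw [Finset.sum_congr rfl hre]
    refine avg_abs_le _ w _ (fun g _ => (hw.1 g).1) (hw.2 (φ s)) _ fun g hg => ?_
    have hφg : φ g = φ s := (Finset.mem_filter.mp hg).2
    have h1 : |Qf R P γ (fun t => ValA πA1 πA2 (φ t)) g a1 a2
        - Qf R P γ (Val π1s π2s) g a1 a2| ≤ γ * Δ := by
      rw [Qf_sub, abs_mul, abs_of_nonneg hγ0]
      refine mul_le_mul_of_nonneg_left ?_ hγ0
      exact avg_abs_le univ (P g a1 a2) _ (fun s' _ => hP.1 g a1 a2 s')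
        (hP.2 g a1 a2) Δ (fun s' _ => hVdiff s')
    have h2 : |Qf R P γ (Val π1s π2s) g a1 a2
        - Qf R P γ (Val π1s π2s) s a1 a2| ≤ ε := hagg g s hφg a1 a2
    calc |Qf R P γ (fun t => ValA πA1 πA2 (φ t)) g a1 a2
          - Qf R P γ (Val π1s π2s) s a1 a2|
        ≤ |Qf R P γ (fun t => ValA πA1 πA2 (φ t)) g a1 a2
            - Qf R P γ (Val π1s π2s) g a1 a2|
          + |Qf R P γ (Val π1s π2s) g a1 a2
            - Qf R P γ (Val π1s π2s) s a1 a2| := abs_sub_le _ _ _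
      _ ≤ ε + γ * Δ := by linarith
  -- contraction: Δ ≤ ε/(1-γ)
  have hΔself : Δ ≤ ε + γ * Δ := by
    have h := hQclose s₀ a₀ b₀
    rw [← hΔeq] at h
    exact h
  have hΔ1γ : Δ * (1 - γ) ≤ ε := by nlinarith
  have hΔε : Δ ≤ ε / (1 - γ) := by rw [le_div_iff₀ hγ1']; exact hΔ1γ
  -- lower bound : V* ≤ V†
  have hlow : ∀ s, Val π1s π2s s ≤ Val π1d (fun t => πA2 (φ t)) s := by
    intro s
    have h1 : Val π1s (fun t => πA2 (φ t)) s ≥ Val π1s π2s s :=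
      (hNash.2.2 s π1d (fun t => πA2 (φ t)) hBR.1 h2g).1
    have h2 := hBR.2 π1s hπ1s s
    linarith
  -- upper bound via the max gap D
  obtain ⟨t0, _, ht0⟩ := Finset.exists_max_image (univ : Finset S)
    (fun t => Val π1d (fun u => πA2 (φ u)) t - Val π1s π2s t) univ_nonempty
  have ht0' : ∀ t, Val π1d (fun u => πA2 (φ u)) t - Val π1s π2s t
      ≤ Val π1d (fun u => πA2 (φ u)) t0 - Val π1s π2s t0 :=
    fun t => ht0 t (Finset.mem_univ t)
  have hBellD : IsValue R P γ π1d (fun u => πA2 (φ u)) (Val π1d (fun u => πA2 (φ u))) :=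
    hVal π1d (fun u => πA2 (φ u)) hBR.1 h2g
  have hkey : Val π1d (fun u => πA2 (φ u)) t0 - Val π1s π2s t0
      ≤ 2 * (ε / (1 - γ)) + γ * (Val π1d (fun u => πA2 (φ u)) t0 - Val π1s π2s t0) := by
    have hVd := hBellD t0
    have h1 : (∑ a1, ∑ a2, π1d t0 a1 * πA2 (φ t0) a2 *
          Qf R P γ (Val π1d (fun u => πA2 (φ u))) t0 a1 a2)
        - (∑ a1, ∑ a2, π1d t0 a1 * πA2 (φ t0) a2 *
          Qf R P γ (Val π1s π2s) t0 a1 a2)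
        ≤ γ * (Val π1d (fun u => πA2 (φ u)) t0 - Val π1s π2s t0) := by
      rw [sum2_sub]
      refine avg2_le _ _ (hBR.1.1 t0) (hπA2.1 _) (hBR.1.2 t0) (hπA2.2 _) _ _
        fun a1 a2 => ?_
      rw [Qf_sub]
      refine mul_le_mul_of_nonneg_left ?_ hγ0
      exact avg_le_of univ (P t0 a1 a2) _ (fun s' _ => hP.1 t0 a1 a2 s')
        (hP.2 t0 a1 a2) _ (fun s' _ => ht0' s')
    have h2a : (∑ a1, ∑ a2, π1d t0 a1 * πA2 (φ t0) a2 *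
          Qf R P γ (Val π1s π2s) t0 a1 a2)
        - (∑ a1, ∑ a2, π1d t0 a1 * πA2 (φ t0) a2 *
          Qf (RA R φ w) (PA P φ w) γ (ValA πA1 πA2) (φ t0) a1 a2)
        ≤ ε + γ * Δ := by
      rw [sum2_sub]
      exact avg2_le _ _ (hBR.1.1 t0) (hπA2.1 _) (hBR.1.2 t0) (hπA2.2 _) _ _
        fun a1 a2 => (abs_sub_le_iff.mp (hQclose t0 a1 a2)).2
    have h2b : ∑ a1, ∑ a2, π1d t0 a1 * πA2 (φ t0) a2 *
        Qf (RA R φ w) (PA P φ w) γ (ValA πA1 πA2) (φ t0) a1 a2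
          ≤ ValA πA1 πA2 (φ t0) := by
      rw [avg_mul1]
      exact avg_le_of univ (π1d t0) _ (fun a _ => hBR.1.1 t0 a) (hBR.1.2 t0) _
        (fun a1 _ => hA1 (φ t0) a1)
    have h2c : ValA πA1 πA2 (φ t0) - Val π1s π2s t0 ≤ Δ :=
      (abs_sub_le_iff.mp (hVdiff t0)).1
    have hεγΔ : ε + γ * Δ ≤ ε / (1 - γ) := by
      rw [le_div_iff₀ hγ1']
      nlinarith
    linarith
  have hDD : Val π1d (fun u => πA2 (φ u)) t0 - Val π1s π2s t0 ≤ 2 * ε / (1 - γ) ^ 2 := by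
    have hp2 : (0:ℝ) < (1 - γ) ^ 2 := by positivity
    rw [le_div_iff₀ hp2]
    have hc : ε / (1 - γ) * (1 - γ) = ε := div_mul_cancel₀ _ (ne_of_gt hγ1')
    nlinarith
  -- conclusion
  intro s a1 a2
  rw [Qf_sub, abs_mul, abs_of_nonneg hγ0]
  have hb0 : (0:ℝ) ≤ 2 * ε / (1 - γ) ^ 2 := by positivity
  have habs : |∑ s', P s a1 a2 s' * (Val π1s π2s s' - Val π1d (fun u => πA2 (φ u)) s')|
      ≤ 2 * ε / (1 - γ) ^ 2 := by
    refine avg_abs_le univ (P s a1 a2) _ (fun s' _ => hP.1 s a1 a2 s')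
      (hP.2 s a1 a2) _ fun s' _ => ?_
    rw [abs_of_nonpos (by linarith [hlow s'])]
    have := ht0' s'
    linarith
  nlinarith
end

section
/- Suppose that for some δ ≥ 0 the aggregation map φ satisfies |Q^{π1†, π_GA,2*}(s, a) − Q_A^{π_A*}(φ(s), a)| ≤ δ for all s ∈ S and all a ∈ A1×A2. Then for every s ∈ S, V^{π1†, π_GA,2*}(s) ≤ Σ_{a∈A1×A2} π_GA,1*(a1|s) π_GA,2*(a2|s) Q^{π1†, π_GA,2*}(s, a) + 2δ. -/
open Finset

section Aux

variable {X A1 A2 : Type*} [Fintype X] [Fintype A1] [Fintype A2]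

lemma weight_sum_one (π1 : X → A1 → ℝ) (π2 : X → A2 → ℝ)
    (hπ1 : IsPolicy π1) (hπ2 : IsPolicy π2) (x : X) :
    ∑ a1, ∑ a2, π1 x a1 * π2 x a2 = 1 := by
  rw [← Finset.sum_mul_sum, hπ1.2, hπ2.2, one_mul]

lemma weighted_le (π1 : X → A1 → ℝ) (π2 : X → A2 → ℝ)
    (hπ1 : IsPolicy π1) (hπ2 : IsPolicy π2) (x : X)
    (f g : A1 → A2 → ℝ) (δ : ℝ)
    (h : ∀ a1 a2, f a1 a2 ≤ g a1 a2 + δ) :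
    ∑ a1, ∑ a2, π1 x a1 * π2 x a2 * f a1 a2 ≤
      (∑ a1, ∑ a2, π1 x a1 * π2 x a2 * g a1 a2) + δ := by
  have h1 : ∑ a1, ∑ a2, π1 x a1 * π2 x a2 * f a1 a2 ≤
      ∑ a1, ∑ a2, π1 x a1 * π2 x a2 * (g a1 a2 + δ) := by
    refine Finset.sum_le_sum fun a1 _ => Finset.sum_le_sum fun a2 _ => ?_
    exact mul_le_mul_of_nonneg_left (h a1 a2) (mul_nonneg (hπ1.1 x a1) (hπ2.1 x a2))
  have h2 : ∑ a1, ∑ a2, π1 x a1 * π2 x a2 * (g a1 a2 + δ)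
      = (∑ a1, ∑ a2, π1 x a1 * π2 x a2 * g a1 a2)
        + (∑ a1, ∑ a2, π1 x a1 * π2 x a2) * δ := by
    simp [mul_add, Finset.sum_add_distrib, Finset.sum_mul]
  rw [h2, weight_sum_one π1 π2 hπ1 hπ2 x, one_mul] at h1
  exact h1

/-- If `V ≤ T_π V` pointwise and `V'` is the fixed point of the Bellman operator
`T_π`, then `V ≤ V'`. -/
lemma value_comparison [Nonempty X]
    (R' : X → A1 → A2 → ℝ) (P' : X → A1 → A2 → X → ℝ) (γ : ℝ)
    (hP' : IsKernel P') (hγ0 : 0 ≤ γ) (hγ1 : γ < 1)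
    (π1 : X → A1 → ℝ) (π2 : X → A2 → ℝ) (hπ1 : IsPolicy π1) (hπ2 : IsPolicy π2)
    (V V' : X → ℝ)
    (hV' : IsValue R' P' γ π1 π2 V')
    (hV : ∀ x, V x ≤ ∑ a1, ∑ a2, π1 x a1 * π2 x a2 * Qf R' P' γ V x a1 a2) :
    ∀ x, V x ≤ V' x := by
  obtain ⟨x0, -, hmin⟩ := Finset.exists_min_image Finset.univ (fun x => V' x - V x)
    ⟨Classical.arbitrary X, Finset.mem_univ _⟩
  set m := V' x0 - V x0 with hm
  have hkey : ∀ x, m ≤ V' x - V x := fun x => hmin x (Finset.mem_univ x)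
  have hQ : ∀ a1 a2, γ * m ≤ Qf R' P' γ V' x0 a1 a2 - Qf R' P' γ V x0 a1 a2 := by
    intro a1 a2
    have h1 : Qf R' P' γ V' x0 a1 a2 - Qf R' P' γ V x0 a1 a2
        = γ * ∑ y, P' x0 a1 a2 y * (V' y - V y) := by
      simp only [Qf, mul_sub, Finset.mul_sum, Finset.sum_sub_distrib]; ring
    rw [h1]
    have h2 : m ≤ ∑ y, P' x0 a1 a2 y * (V' y - V y) := by
      calc m = ∑ y, P' x0 a1 a2 y * m := by
              rw [← Finset.sum_mul, hP'.2 x0 a1 a2, one_mul]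
        _ ≤ _ := Finset.sum_le_sum fun y _ =>
              mul_le_mul_of_nonneg_left (hkey y) (hP'.1 _ _ _ _)
    exact mul_le_mul_of_nonneg_left h2 hγ0
  have hmain : γ * m ≤ m := by
    have h3 : (∑ a1, ∑ a2, π1 x0 a1 * π2 x0 a2 * Qf R' P' γ V' x0 a1 a2)
        - (∑ a1, ∑ a2, π1 x0 a1 * π2 x0 a2 * Qf R' P' γ V x0 a1 a2) ≤ m := by
      have := hV x0
      rw [hm, hV' x0]
      linarith
    have h4 : (∑ a1, ∑ a2, π1 x0 a1 * π2 x0 a2 * Qf R' P' γ V' x0 a1 a2)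
        - (∑ a1, ∑ a2, π1 x0 a1 * π2 x0 a2 * Qf R' P' γ V x0 a1 a2)
        = ∑ a1, ∑ a2, π1 x0 a1 * π2 x0 a2
            * (Qf R' P' γ V' x0 a1 a2 - Qf R' P' γ V x0 a1 a2) := by
      simp [mul_sub, Finset.sum_sub_distrib]
    have h5 : γ * m ≤ ∑ a1, ∑ a2, π1 x0 a1 * π2 x0 a2
        * (Qf R' P' γ V' x0 a1 a2 - Qf R' P' γ V x0 a1 a2) := by
      calc γ * m = ∑ a1, ∑ a2, π1 x0 a1 * π2 x0 a2 * (γ * m) := by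
            simp only [← Finset.sum_mul]
            rw [weight_sum_one π1 π2 hπ1 hπ2 x0, one_mul]
        _ ≤ _ := Finset.sum_le_sum fun a1 _ => Finset.sum_le_sum fun a2 _ =>
            mul_le_mul_of_nonneg_left (hQ a1 a2)
              (mul_nonneg (hπ1.1 x0 a1) (hπ2.1 x0 a2))
    linarith [h4 ▸ h3]
  have hm0 : 0 ≤ m := by nlinarith
  intro x
  linarith [hkey x]

/-- One-step deviation principle at a Nash equilibrium: any mixed action of
player 1 against `π2` and the equilibrium `Q`-values cannot beat the
equilibrium value. -/
lemma nash_one_step [Nonempty X] [DecidableEq X]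
    (R' : X → A1 → A2 → ℝ) (P' : X → A1 → A2 → X → ℝ) (γ : ℝ)
    (hP' : IsKernel P') (hγ0 : 0 ≤ γ) (hγ1 : γ < 1)
    (Val : (X → A1 → ℝ) → (X → A2 → ℝ) → X → ℝ)
    (hVal : IsValueOperator R' P' γ Val)
    (π1 : X → A1 → ℝ) (π2 : X → A2 → ℝ)
    (hNash : IsNash Val π1 π2)
    (μ : A1 → ℝ) (hμ0 : ∀ a, 0 ≤ μ a) (hμ1 : ∑ a, μ a = 1) (x0 : X) :
    ∑ a1, ∑ a2, μ a1 * π2 x0 a2 * Qf R' P' γ (Val π1 π2) x0 a1 a2 ≤ Val π1 π2 x0 := by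
  obtain ⟨hπ1, hπ2, hN⟩ := hNash
  by_contra hcon
  push_neg at hcon
  set π1' : X → A1 → ℝ := fun x => if x = x0 then μ else π1 x with hπ1'def
  have hπ1' : IsPolicy π1' := by
    constructor
    · intro x a; by_cases h : x = x0 <;> simp [hπ1'def, h, hμ0, hπ1.1]
    · intro x; by_cases h : x = x0 <;> simp [hπ1'def, h, hμ1, hπ1.2]
  have hBellV : IsValue R' P' γ π1 π2 (Val π1 π2) := hVal π1 π2 hπ1 hπ2
  have hBellV' : IsValue R' P' γ π1' π2 (Val π1' π2) := hVal π1' π2 hπ1' hπ2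
  have hVle : ∀ x, Val π1 π2 x ≤
      ∑ a1, ∑ a2, π1' x a1 * π2 x a2 * Qf R' P' γ (Val π1 π2) x a1 a2 := by
    intro x
    by_cases h : x = x0
    · subst h
      simp only [hπ1'def, if_pos rfl]
      exact hcon.le
    · simp only [hπ1'def, if_neg h]
      exact (hBellV x).le
  have hle := value_comparison R' P' γ hP' hγ0 hγ1 π1' π2 hπ1' hπ2
    (Val π1 π2) (Val π1' π2) hBellV' hVle
  have hmono : ∑ a1, ∑ a2, π1' x0 a1 * π2 x0 a2 * Qf R' P' γ (Val π1 π2) x0 a1 a2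
      ≤ ∑ a1, ∑ a2, π1' x0 a1 * π2 x0 a2 * Qf R' P' γ (Val π1' π2) x0 a1 a2 := by
    refine Finset.sum_le_sum fun a1 _ => Finset.sum_le_sum fun a2 _ => ?_
    refine mul_le_mul_of_nonneg_left ?_ (mul_nonneg (hπ1'.1 x0 a1) (hπ2.1 x0 a2))
    simp only [Qf]
    have hs : ∑ y, P' x0 a1 a2 y * Val π1 π2 y ≤ ∑ y, P' x0 a1 a2 y * Val π1' π2 y :=
      Finset.sum_le_sum fun y _ => mul_le_mul_of_nonneg_left (hle y) (hP'.1 _ _ _ _)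
    have := mul_le_mul_of_nonneg_left hs hγ0
    linarith
  have hNx := (hN x0 π1' π2 hπ1' hπ2).2
  have hlt : Val π1 π2 x0 < Val π1' π2 x0 := by
    calc Val π1 π2 x0
        < ∑ a1, ∑ a2, μ a1 * π2 x0 a2 * Qf R' P' γ (Val π1 π2) x0 a1 a2 := hcon
      _ = ∑ a1, ∑ a2, π1' x0 a1 * π2 x0 a2 * Qf R' P' γ (Val π1 π2) x0 a1 a2 := by
          simp [hπ1'def]
      _ ≤ ∑ a1, ∑ a2, π1' x0 a1 * π2 x0 a2 * Qf R' P' γ (Val π1' π2) x0 a1 a2 := hmono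
      _ = Val π1' π2 x0 := (hBellV' x0).symm
  exact absurd hNx (by simp only [ge_iff_le, not_le]; linarith)

end Aux

lemma PA_isKernel {S SA A1 A2 : Type*} [Fintype S] [Fintype SA] [DecidableEq SA]
    (P : S → A1 → A2 → S → ℝ) (hP : IsKernel P)
    (φ : S → SA) (w : S → ℝ) (hw : IsAggWeight φ w) :
    IsKernel (PA P φ w : SA → A1 → A2 → SA → ℝ) := by
  constructor
  · intro sA a1 a2 sA'
    refine Finset.sum_nonneg fun s _ => Finset.sum_nonneg fun s' _ => ?_
    exact mul_nonneg (hP.1 _ _ _ _) (hw.1 s).1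
  · intro sA a1 a2
    simp only [PA]
    rw [Finset.sum_comm]
    have hterm : ∀ s ∈ univ.filter (fun s => φ s = sA),
        (∑ sA' : SA, ∑ s' ∈ univ.filter (fun s' => φ s' = sA'), P s a1 a2 s' * w s)
          = w s := by
      intro s _
      rw [Finset.sum_fiberwise univ (fun s' => φ s') (fun s' => P s a1 a2 s' * w s),
        ← Finset.sum_mul, hP.2 s a1 a2, one_mul]
    rw [Finset.sum_congr rfl hterm, hw.2 sA]

theorem best_response_value_bounded_by_profile_Q
    {S SA A1 A2 : Type*}
    [Fintype S] [Nonempty S] [Fintype SA] [DecidableEq SA]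
    [Fintype A1] [Nonempty A1] [Fintype A2] [Nonempty A2]
    (P : S → A1 → A2 → S → ℝ) (R : S → A1 → A2 → ℝ) (γ : ℝ)
    (hP : IsKernel P) (hR : IsReward R) (hγ0 : 0 ≤ γ) (hγ1 : γ < 1)
    (Val : (S → A1 → ℝ) → (S → A2 → ℝ) → S → ℝ)
    (hVal : IsValueOperator R P γ Val)
    (φ : S → SA) (hφ : Function.Surjective φ)
    (w : S → ℝ) (hw : IsAggWeight φ w)
    (ValA : (SA → A1 → ℝ) → (SA → A2 → ℝ) → SA → ℝ)
    (hValA : IsValueOperator (RA R φ w) (PA P φ w) γ ValA)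
    (πA1 : SA → A1 → ℝ) (πA2 : SA → A2 → ℝ)
    (hNashA : IsNash ValA πA1 πA2)
    (π1d : S → A1 → ℝ)
    (hBR : IsBestResponse1 Val π1d (fun s => πA2 (φ s)))
    (δ : ℝ) (hδ : 0 ≤ δ)
    (hclose : ∀ (s : S) (a1 : A1) (a2 : A2),
      |Qf R P γ (Val π1d (fun s => πA2 (φ s))) s a1 a2 - Qf (RA R φ w) (PA P φ w) γ (ValA πA1 πA2) (φ s) a1 a2| ≤ δ) :
    ∀ s : S,
      Val π1d (fun s => πA2 (φ s)) s
        ≤ (∑ a1, ∑ a2, πA1 (φ s) a1 * πA2 (φ s) a2 * Qf R P γ (Val π1d (fun s => πA2 (φ s))) s a1 a2) + 2 * δ := by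
  intro s
  have : Nonempty SA := ⟨φ (Classical.arbitrary S)⟩
  have hπA1 := hNashA.1
  have hπA2 := hNashA.2.1
  have hπG2 : IsPolicy (fun s : S => πA2 (φ s)) :=
    ⟨fun s a => hπA2.1 _ a, fun s => hπA2.2 _⟩
  have hπ1d := hBR.1
  have hBell : IsValue R P γ π1d (fun s => πA2 (φ s)) (Val π1d (fun s => πA2 (φ s))) :=
    hVal _ _ hπ1d hπG2
  have hVA : IsValue (RA R φ w) (PA P φ w) γ πA1 πA2 (ValA πA1 πA2) :=
    hValA πA1 πA2 hπA1 hπA2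
  have hPA := PA_isKernel P hP φ w hw
  -- Step 1: V†(s) = Σ π1d πA2 Q†(s) ≤ Σ π1d πA2 Q_A(φ s) + δ
  have step1 : Val π1d (fun s => πA2 (φ s)) s
      ≤ (∑ a1, ∑ a2, π1d s a1 * πA2 (φ s) a2
          * Qf (RA R φ w) (PA P φ w) γ (ValA πA1 πA2) (φ s) a1 a2) + δ := by
    rw [hBell s]
    exact weighted_le π1d (fun s => πA2 (φ s)) hπ1d hπG2 s _ _ δ
      fun a1 a2 => by linarith [abs_le.mp (hclose s a1 a2) |>.2]
  -- Step 2: one-step deviation in the abstract game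
  have step2 : (∑ a1, ∑ a2, π1d s a1 * πA2 (φ s) a2
      * Qf (RA R φ w) (PA P φ w) γ (ValA πA1 πA2) (φ s) a1 a2)
        ≤ ValA πA1 πA2 (φ s) :=
    nash_one_step (RA R φ w) (PA P φ w) γ hPA hγ0 hγ1 ValA hValA πA1 πA2 hNashA
      (π1d s) (fun a => hπ1d.1 s a) (hπ1d.2 s) (φ s)
  -- Step 3: V_A(φ s) = Σ πA1 πA2 Q_A(φ s) ≤ Σ πA1 πA2 Q†(s) + δ
  have step3 : ValA πA1 πA2 (φ s)
      ≤ (∑ a1, ∑ a2, πA1 (φ s) a1 * πA2 (φ s) a2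
          * Qf R P γ (Val π1d (fun s => πA2 (φ s))) s a1 a2) + δ := by
    rw [hVA (φ s)]
    exact weighted_le πA1 πA2 hπA1 hπA2 (φ s) _ _ δ
      fun a1 a2 => by linarith [abs_le.mp (hclose s a1 a2) |>.1]
  linarith
end
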